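/- arXiv:1305.3037 — 2 statements merged into one kernel-verified Lean document; each statement's English description precedes it below -/
import Mathlib

section
/- Let $d\ge 1$ and $1\le p\le\infty$. Suppose $\alpha>(1/p-1/2)d$ if $1\le p<2$, and $\alpha\ge 0$ if $2\le p\le\infty$. Then there is a constant $C=C(\alpha,d,p)$ such that for all $f\in L^1\cap\dot H^\alpha(\mathbb{R}^d)$ one has $\hat f\in L^p(\mathbb{R}^d)$ and $\|\hat f\|_{L^p}\le C\,\|f\|_{L^1}^{1-\mu}\,\|f\|_{\dot H^\alpha}^{\mu}$ with $\mu = 2d/(p(d+2\alpha))$. -/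
/-!
Since `‖𝓕 f‖∞ ≤ ‖f‖₁`, split `∫ |𝓕 f|^p` into the ball `|ξ| < r` and its complement. The ball
contributes at most `|B₁| ‖f‖₁^p r^d`. Outside it, for `p ≥ 2` the bound
`|𝓕 f|^p ≤ ‖f‖₁^(p-2) r^(-2α) |ξ|^(2α) |𝓕 f|²` gives `‖f‖₁^(p-2) r^(-2α) ‖f‖²_{Ḣ^α}`; for `p < 2`,
Hölder with exponents `2/p` and `2/(2-p)` against the weight `|ξ|^(-αp)` gives
`‖f‖^p_{Ḣ^α} (∫_{|ξ| ≥ r} |ξ|^(-s))^((2-p)/2)` with `s = 2αp/(2-p)`, and `s > d` is exactly the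
hypothesis on `α`; in polar coordinates that integral is `c r^(d-s)`. Choosing
`r^((d+2α)/2) = ‖f‖_{Ḣ^α} / ‖f‖₁` makes every term `‖f‖₁^(p-μp) ‖f‖_{Ḣ^α}^(μp)`.
-/
open MeasureTheory FourierTransform ENNReal
open scoped NNReal

noncomputable def L1e (d : ℕ) (f : EuclideanSpace ℝ (Fin d) → ℂ) : ℝ≥0∞ :=
  ∫⁻ v, ‖f v‖₊

noncomputable def He (d : ℕ) (s : ℝ) (f : EuclideanSpace ℝ (Fin d) → ℂ) : ℝ≥0∞ :=
  (∫⁻ ξ, (‖ξ‖₊ : ℝ≥0∞) ^ (2 * s) * (‖𝓕 f ξ‖₊ : ℝ≥0∞) ^ (2 : ℝ)) ^ ((1 : ℝ) / 2)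

open Metric Set Module

lemma rpow_sub_mul_rpow_mul_div_rpow {A B : ℝ≥0∞} (hA0 : A ≠ 0) (hA : A ≠ ⊤) (hB0 : B ≠ 0)
    (hB : B ≠ ⊤) {β : ℝ} (hβ : β ≠ 0) (q κ n : ℝ) :
    A ^ (q - κ) * B ^ κ * ((B / A) ^ β⁻¹) ^ (n - κ * β) = A ^ (q - n / β) * B ^ (n / β) := by
  rw [← rpow_mul, show β⁻¹ * (n - κ * β) = n / β - κ by field_simp, div_eq_mul_inv,
    mul_rpow_of_ne_top hB (inv_ne_top.2 hA0), inv_rpow, ← rpow_neg]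
  calc A ^ (q - κ) * B ^ κ * (B ^ (n / β - κ) * A ^ (-(n / β - κ)))
      = A ^ (q - κ) * A ^ (-(n / β - κ)) * (B ^ κ * B ^ (n / β - κ)) := by ring
    _ = A ^ (q - n / β) * B ^ (n / β) := by
      rw [← rpow_add _ _ hA0 hA, ← rpow_add _ _ hB0 hB]
      ring_nf

lemma le_of_forall_radius_le {F A B K₁ K₂ : ℝ≥0∞} (hA0 : A ≠ 0) (hA : A ≠ ⊤) (hB0 : B ≠ 0)
    (hB : B ≠ ⊤) {n β q κ : ℝ} (hβ : 0 < β)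
    (h : ∀ r : ℝ, 0 < r → F ≤ K₁ * (A ^ q * ENNReal.ofReal r ^ n) +
      K₂ * (A ^ (q - κ) * B ^ κ * ENNReal.ofReal r ^ (n - κ * β))) :
    F ≤ (K₁ + K₂) * (A ^ (q - n / β) * B ^ (n / β)) := by
  set R := (B / A) ^ β⁻¹
  have hR0 : R ≠ 0 := by simp [R, rpow_eq_zero_iff, div_eq_zero_iff, hB0, hA, hβ, hβ.le]
  have hRt : R ≠ ⊤ := rpow_ne_top_of_ne_zero (by simp [div_eq_zero_iff, hB0, hA])
    (div_ne_top hB hA0)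
  have hlow := rpow_sub_mul_rpow_mul_div_rpow hA0 hA hB0 hB hβ.ne' q 0 n
  simp only [sub_zero, rpow_zero, mul_one, zero_mul] at hlow
  have := h R.toReal (toReal_pos hR0 hRt)
  rwa [ofReal_toReal hRt, hlow, rpow_sub_mul_rpow_mul_div_rpow hA0 hA hB0 hB hβ.ne', ← add_mul]
    at this

lemma integrableOn_and_integral_Ioi_pow_mul_indicator_Ici {k : ℕ} {s r : ℝ} (hks : (k : ℝ) - s < -1) (hr : 0 < r) :
    IntegrableOn (fun y : ℝ => y ^ k * (Ici r).indicator (· ^ (-s)) y) (Ioi 0) ∧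
    ∫ y in Ioi 0, y ^ k * (Ici r).indicator (· ^ (-s)) y = r ^ (k - s + 1) / (s - k - 1) := by
  have hfun : EqOn (fun y : ℝ => y ^ k * (Ici r).indicator (· ^ (-s)) y)
      ((Ici r).indicator (· ^ ((k : ℝ) - s))) (Ioi 0) := by
    intro y (hy : 0 < y)
    by_cases hyr : y ∈ Ici r
    · simp [indicator_of_mem hyr, ← Real.rpow_natCast, ← Real.rpow_add hy, sub_eq_add_neg]
    · simp [indicator_of_notMem hyr]
  have hsub : Ici r ∩ Ioi (0 : ℝ) = Ici r := inter_eq_left.mpr (Ici_subset_Ioi.mpr hr)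
  refine ⟨?_, ?_⟩
  · refine IntegrableOn.congr_fun ?_ hfun.symm measurableSet_Ioi
    rw [integrableOn_indicator_iff measurableSet_Ici, hsub]
    exact (integrableOn_Ici_iff_integrableOn_Ioi (by simp)).mpr (integrableOn_Ioi_rpow_of_lt hks hr)
  · rw [setIntegral_congr_fun measurableSet_Ioi hfun, setIntegral_indicator measurableSet_Ici,
      inter_comm, hsub, integral_Ici_eq_integral_Ioi, integral_Ioi_rpow_of_lt hks hr, neg_div,
      ← div_neg]
    congr 1
    ring

section SplitEstimates

variable {E : Type*} [NormedAddCommGroup E] [MeasurableSpace E] [BorelSpace E] (μ : Measure E)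

lemma setLIntegral_compl_ball_rpow_le_of_lt_two {u : E → ℝ≥0∞} (hu : Measurable u) {q α r : ℝ}
    (hq0 : 0 < q) (hq : q < 2) (hr : 0 < r) :
    ∫⁻ ξ in (ball 0 r)ᶜ, u ξ ^ q ∂μ ≤
      (∫⁻ ξ, ‖ξ‖ₑ ^ (2 * α) * u ξ ^ (2 : ℝ) ∂μ) ^ (q / 2) *
        (∫⁻ ξ in (ball 0 r)ᶜ, ‖ξ‖ₑ ^ (-(2 * α * q / (2 - q))) ∂μ) ^ ((2 - q) / 2) := by
  have h2q : 0 < 2 - q := by linarith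
  have hconj : (2 / q).HolderConjugate (2 / (2 - q)) :=
    ⟨by rw [inv_div, inv_div, inv_one]; ring, by positivity, by positivity⟩
  have hsplit : ∀ ξ ∈ (ball (0 : E) r)ᶜ,
      u ξ ^ q = (‖ξ‖ₑ ^ α * u ξ) ^ q * ‖ξ‖ₑ ^ (-(α * q)) := by
    intro ξ hξ
    have hξ0 : ‖ξ‖ₑ ≠ 0 := by
      have : r ≤ ‖ξ‖ := by simpa using hξ
      simpa using (hr.trans_le this).ne'
    rw [mul_rpow_of_nonneg _ _ hq0.le, ← rpow_mul, mul_comm, ← mul_assoc,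
      ← rpow_add _ _ hξ0 enorm_ne_top, neg_add_cancel, rpow_zero, one_mul]
  have hweighted : ∀ ξ : E, ((‖ξ‖ₑ ^ α * u ξ) ^ q) ^ (2 / q) = ‖ξ‖ₑ ^ (2 * α) * u ξ ^ (2 : ℝ) := by
    intro ξ
    rw [← rpow_mul, mul_div_cancel₀ _ hq0.ne', mul_rpow_of_nonneg _ _ zero_le_two, ← rpow_mul,
      mul_comm α]
  have hdecay : ∀ ξ : E, (‖ξ‖ₑ ^ (-(α * q))) ^ (2 / (2 - q)) = ‖ξ‖ₑ ^ (-(2 * α * q / (2 - q))) := by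
    intro ξ
    rw [← rpow_mul]
    ring_nf
  calc ∫⁻ ξ in (ball 0 r)ᶜ, u ξ ^ q ∂μ
      = ∫⁻ ξ in (ball 0 r)ᶜ, (‖ξ‖ₑ ^ α * u ξ) ^ q * ‖ξ‖ₑ ^ (-(α * q)) ∂μ :=
        setLIntegral_congr_fun measurableSet_ball.compl hsplit
    _ ≤ (∫⁻ ξ in (ball 0 r)ᶜ, ((‖ξ‖ₑ ^ α * u ξ) ^ q) ^ (2 / q) ∂μ) ^ (1 / (2 / q)) *
        (∫⁻ ξ in (ball 0 r)ᶜ, (‖ξ‖ₑ ^ (-(α * q))) ^ (2 / (2 - q)) ∂μ) ^ (1 / (2 / (2 - q))) :=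
        ENNReal.lintegral_mul_le_Lp_mul_Lq _ hconj (by fun_prop) (by fun_prop)
    _ ≤ _ := by
        simp only [one_div_div, hweighted, hdecay]
        gcongr
        exact Measure.restrict_le_self

lemma setLIntegral_compl_ball_rpow_le_of_two_le {u : E → ℝ≥0∞} {A : ℝ≥0∞}
    (hu : ∀ ξ, u ξ ≤ A) (hA : A ≠ ⊤) {q α r : ℝ} (hq : 2 ≤ q) (hα : 0 ≤ α) (hr : 0 < r) :
    ∫⁻ ξ in (ball 0 r)ᶜ, u ξ ^ q ∂μ ≤
      A ^ (q - 2) * ENNReal.ofReal r ^ (-(2 * α)) * ∫⁻ ξ, ‖ξ‖ₑ ^ (2 * α) * u ξ ^ (2 : ℝ) ∂μ := by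
  have hR0 : ENNReal.ofReal r ≠ 0 := by simpa using hr
  have hweight : ∀ ξ ∈ (ball (0 : E) r)ᶜ,
      1 ≤ ENNReal.ofReal r ^ (-(2 * α)) * ‖ξ‖ₑ ^ (2 * α) := by
    intro ξ hξ
    have hrξ : ENNReal.ofReal r ≤ ‖ξ‖ₑ := by
      rw [← ofReal_norm]
      exact ofReal_le_ofReal (by simpa using hξ)
    rw [rpow_neg, mul_comm, ← div_eq_mul_inv, ← div_rpow_of_nonneg _ _ (by positivity)]
    have h1 : 1 ≤ ‖ξ‖ₑ / ENNReal.ofReal r :=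
      (ENNReal.le_div_iff_mul_le (.inl hR0) (.inl ofReal_ne_top)).2 (by simpa using hrξ)
    simpa using rpow_le_rpow h1 (by linarith : 0 ≤ 2 * α)
  have hpoint : ∀ ξ ∈ (ball (0 : E) r)ᶜ, u ξ ^ q ≤ A ^ (q - 2) * ENNReal.ofReal r ^ (-(2 * α)) *
      (‖ξ‖ₑ ^ (2 * α) * u ξ ^ (2 : ℝ)) := fun ξ hξ =>
    calc u ξ ^ q = u ξ ^ (q - 2) * (1 * u ξ ^ (2 : ℝ)) := by
          rw [one_mul, ← rpow_add_of_nonneg _ _ (by linarith) zero_le_two, sub_add_cancel]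
      _ ≤ A ^ (q - 2) * ((ENNReal.ofReal r ^ (-(2 * α)) * ‖ξ‖ₑ ^ (2 * α)) * u ξ ^ (2 : ℝ)) := by
          gcongr
          · exact hu ξ
          · exact hweight ξ hξ
      _ = _ := by ring
  calc ∫⁻ ξ in (ball 0 r)ᶜ, u ξ ^ q ∂μ
      ≤ ∫⁻ ξ in (ball 0 r)ᶜ, A ^ (q - 2) * ENNReal.ofReal r ^ (-(2 * α)) *
          (‖ξ‖ₑ ^ (2 * α) * u ξ ^ (2 : ℝ)) ∂μ :=
        setLIntegral_mono' measurableSet_ball.compl hpoint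
    _ ≤ _ := setLIntegral_le_lintegral _ _
    _ = _ := lintegral_const_mul' _ _ (mul_ne_top (rpow_ne_top_of_nonneg (by linarith) hA)
          (rpow_ne_top_of_ne_zero hR0 ofReal_ne_top))

variable [NormedSpace ℝ E] [FiniteDimensional ℝ E] [μ.IsAddHaarMeasure]

lemma setLIntegral_ball_rpow_le {u : E → ℝ≥0∞} {A : ℝ≥0∞} (hu : ∀ ξ, u ξ ≤ A) {q r : ℝ}
    (hq : 0 ≤ q) (hr : 0 < r) :
    ∫⁻ ξ in ball 0 r, u ξ ^ q ∂μ ≤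
      μ (ball 0 1) * (A ^ q * ENNReal.ofReal r ^ (finrank ℝ E : ℝ)) :=
  calc ∫⁻ ξ in ball 0 r, u ξ ^ q ∂μ ≤ ∫⁻ _ in ball (0 : E) r, A ^ q ∂μ :=
        setLIntegral_mono' measurableSet_ball fun ξ _ => rpow_le_rpow (hu ξ) hq
    _ = μ (ball 0 1) * (A ^ q * ENNReal.ofReal r ^ (finrank ℝ E : ℝ)) := by
        rw [setLIntegral_const, μ.addHaar_ball_of_pos _ hr, ENNReal.ofReal_pow hr.le,
          rpow_natCast]
        ring

end SplitEstimates

section Interpolation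

variable {E : Type*} [NormedAddCommGroup E] [NormedSpace ℝ E] [FiniteDimensional ℝ E]
  [MeasurableSpace E] [BorelSpace E] (μ : Measure E) [μ.IsAddHaarMeasure] [Nontrivial E]

lemma setLIntegral_compl_ball_norm_rpow_neg {s r : ℝ} (hs : (finrank ℝ E : ℝ) < s) (hr : 0 < r) :
    ∫⁻ ξ in (ball (0 : E) r)ᶜ, ‖ξ‖ₑ ^ (-s) ∂μ =
      ENNReal.ofReal (finrank ℝ E * μ.real (ball 0 1) / (s - finrank ℝ E)) *
        ENNReal.ofReal r ^ ((finrank ℝ E : ℝ) - s) := by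
  have hf : ∀ ξ : E, (ball 0 r)ᶜ.indicator (fun ξ => ‖ξ‖ₑ ^ (-s)) ξ =
      ENNReal.ofReal ((Ici r).indicator (· ^ (-s)) ‖ξ‖) := by
    intro ξ
    by_cases hξ : r ≤ ‖ξ‖
    · have hmem : ξ ∈ (ball (0 : E) r)ᶜ := by simpa using hξ
      rw [indicator_of_mem hmem, indicator_of_mem (show ‖ξ‖ ∈ Ici r from hξ),
        ← ofReal_norm, ENNReal.ofReal_rpow_of_pos (hr.trans_le hξ)]
    · have hmem : ξ ∉ (ball (0 : E) r)ᶜ := by simpa using hξ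
      rw [indicator_of_notMem hmem, indicator_of_notMem (show ‖ξ‖ ∉ Ici r from hξ),
        ENNReal.ofReal_zero]
  have hn : 1 ≤ finrank ℝ E := finrank_pos
  have hks : ((finrank ℝ E - 1 : ℕ) : ℝ) - s < -1 := by
    rw [Nat.cast_sub hn]; push_cast; linarith
  obtain ⟨hint, heq⟩ := integrableOn_and_integral_Ioi_pow_mul_indicator_Ici hks hr
  rw [← lintegral_indicator measurableSet_ball.compl, funext hf,
    ← ofReal_integral_eq_lintegral_ofReal ((integrable_fun_norm_addHaar μ).mpr hint)
      (.of_forall fun ξ => indicator_nonneg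
        (fun y (hy : r ≤ y) => Real.rpow_nonneg (hr.le.trans hy) _) _),
    integral_fun_norm_addHaar]
  simp only [nsmul_eq_mul, smul_eq_mul]
  rw [heq, Nat.cast_sub hn, ofReal_rpow_of_pos hr, ← ofReal_mul (by positivity)]
  congr 1
  push_cast
  field_simp
  ring_nf

-- `κ = 2` for `q ≥ 2` and `κ = q` for `q < 2`; the power of `r` is the one that
-- `le_of_forall_radius_le` balances against the contribution of the ball.
lemma exists_setLIntegral_compl_ball_rpow_le {q α : ℝ} (hq : 1 ≤ q) (hα : 0 ≤ α)
    (hαq : q < 2 → (1 / q - 1 / 2) * finrank ℝ E < α) :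
    ∃ K : ℝ≥0∞, ∃ κ : ℝ, K ≠ ⊤ ∧ ∀ u : E → ℝ≥0∞, Measurable u → ∀ A B : ℝ≥0∞,
      (∀ ξ, u ξ ≤ A) → A ≠ ⊤ → ∫⁻ ξ, ‖ξ‖ₑ ^ (2 * α) * u ξ ^ (2 : ℝ) ∂μ = B ^ (2 : ℝ) →
      ∀ r : ℝ, 0 < r → ∫⁻ ξ in (ball 0 r)ᶜ, u ξ ^ q ∂μ ≤
        K * (A ^ (q - κ) * B ^ κ *
          ENNReal.ofReal r ^ (finrank ℝ E - κ * ((finrank ℝ E + 2 * α) / 2))) := by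
  set n : ℝ := (finrank ℝ E : ℝ)
  rcases lt_or_ge q 2 with hq2 | hq2
  · have h2q : 0 < 2 - q := by linarith
    have hs : n < 2 * α * q / (2 - q) := by
      have := mul_lt_mul_of_pos_left (hαq hq2) (by positivity : 0 < 2 * q)
      rw [lt_div_iff₀ h2q]
      field_simp at this
      linarith
    refine ⟨ENNReal.ofReal (n * μ.real (ball 0 1) / (2 * α * q / (2 - q) - n)) ^ ((2 - q) / 2), q,
      rpow_ne_top_of_nonneg (by positivity) ofReal_ne_top, fun u hu A B _ _ hB r hr => ?_⟩
    refine (setLIntegral_compl_ball_rpow_le_of_lt_two μ hu (α := α) (by linarith) hq2 hr).trans_eq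
      ?_
    rw [setLIntegral_compl_ball_norm_rpow_neg μ hs hr, hB, ← rpow_mul,
      mul_rpow_of_nonneg _ _ (by positivity), ← rpow_mul, sub_self, rpow_zero, one_mul,
      show 2 * (q / 2) = q by ring,
      show (n - 2 * α * q / (2 - q)) * ((2 - q) / 2) = n - q * ((n + 2 * α) / 2) by
        field_simp; ring]
    ring
  · refine ⟨1, 2, one_ne_top, fun u _ A B hu hA hB r hr => ?_⟩
    refine (setLIntegral_compl_ball_rpow_le_of_two_le μ hu hA hq2 hα hr).trans_eq ?_
    rw [hB, show n - 2 * ((n + 2 * α) / 2) = -(2 * α) by ring]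
    ring

theorem exists_lintegral_rpow_le_mul_rpow {q α : ℝ} (hq : 1 ≤ q)
    (hαq : q < 2 → (1 / q - 1 / 2) * finrank ℝ E < α) (hα2 : 2 ≤ q → 0 ≤ α) :
    ∃ C : ℝ≥0, 0 < C ∧ ∀ u : E → ℝ≥0∞, Measurable u → ∀ A B : ℝ≥0∞, (∀ ξ, u ξ ≤ A) →
      ∫⁻ ξ, ‖ξ‖ₑ ^ (2 * α) * u ξ ^ (2 : ℝ) ∂μ = B ^ (2 : ℝ) →
      A ≠ 0 → A ≠ ⊤ → B ≠ 0 → B ≠ ⊤ →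
      ∫⁻ ξ, u ξ ^ q ∂μ ≤ C * (A ^ (q - 2 * finrank ℝ E / (finrank ℝ E + 2 * α)) *
        B ^ (2 * finrank ℝ E / (finrank ℝ E + 2 * α))) := by
  have hα : 0 ≤ α := by
    rcases lt_or_ge q 2 with h | h
    · refine le_trans (mul_nonneg ?_ (finrank ℝ E).cast_nonneg) (hαq h).le
      exact sub_nonneg.2 (one_div_le_one_div_of_le (by linarith) h.le)
    · exact hα2 h
  obtain ⟨K, κ, hK, hhigh⟩ := exists_setLIntegral_compl_ball_rpow_le μ hq hα hαq
  have hC : μ (ball 0 1) + K ≠ ⊤ := add_ne_top.2 ⟨measure_ball_lt_top.ne, hK⟩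
  refine ⟨(μ (ball 0 1) + K).toNNReal,
    toNNReal_pos (add_pos_of_pos_of_nonneg (measure_ball_pos μ 0 one_pos) zero_le).ne' hC,
    fun u hu A B huA hB hA0 hA hB0 hBt => ?_⟩
  have hn : (0 : ℝ) < finrank ℝ E := by exact_mod_cast finrank_pos
  rw [coe_toNNReal hC, show 2 * (finrank ℝ E : ℝ) / (finrank ℝ E + 2 * α) =
    finrank ℝ E / ((finrank ℝ E + 2 * α) / 2) by field_simp]
  refine le_of_forall_radius_le hA0 hA hB0 hBt (κ := κ) (by positivity) fun r hr => ?_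
  rw [← lintegral_add_compl _ measurableSet_ball]
  exact add_le_add (setLIntegral_ball_rpow_le μ huA (by linarith) hr)
    (hhigh u hu A B huA hA hB r hr)

end Interpolation

lemma ae_eq_zero_of_lintegral_enorm_rpow_mul_eq_zero {E : Type*} [NormedAddCommGroup E]
    [MeasurableSpace E] [BorelSpace E] {μ : Measure E} [NullSingletonClass μ] {u : E → ℝ≥0∞}
    (hu : Measurable u) {α : ℝ} (h : ∫⁻ ξ, ‖ξ‖ₑ ^ (2 * α) * u ξ ^ (2 : ℝ) ∂μ = 0) :
    u =ᵐ[μ] 0 := by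
  filter_upwards [(lintegral_eq_zero_iff (by fun_prop)).1 h, μ.ae_ne 0] with ξ hξ hξ0
  have hweight : ‖ξ‖ₑ ^ (2 * α) ≠ 0 := (rpow_pos (enorm_pos.2 hξ0) enorm_ne_top).ne'
  simpa [hweight, rpow_eq_zero_iff] using hξ

lemma eLpNorm_le_of_lintegral_rpow_le {X : Type*} [MeasurableSpace X] {μ : Measure X}
    {G : Type*} [NormedAddCommGroup G] {g : X → G} {p : ℝ≥0∞} (hp0 : p ≠ 0) (hp : p ≠ ⊤)
    {C A B : ℝ≥0∞} {ν : ℝ}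
    (h : ∫⁻ x, ‖g x‖ₑ ^ p.toReal ∂μ ≤ C * (A ^ (p.toReal - ν) * B ^ ν)) :
    eLpNorm g p μ ≤ C ^ p.toReal⁻¹ * A ^ (1 - ν / p.toReal) * B ^ (ν / p.toReal) := by
  have hq : 0 < p.toReal := toReal_pos hp0 hp
  rw [eLpNorm_eq_lintegral_rpow_enorm_toReal hp0 hp, one_div]
  refine (rpow_le_rpow h (by positivity)).trans_eq ?_
  rw [mul_rpow_of_nonneg _ _ (by positivity), mul_rpow_of_nonneg _ _ (by positivity),
    ← rpow_mul, ← rpow_mul, mul_assoc]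
  congr 4
  field_simp

section Fourier

variable {V F : Type*} [NormedAddCommGroup V] [InnerProductSpace ℝ V] [FiniteDimensional ℝ V]
  [MeasurableSpace V] [BorelSpace V] [NormedAddCommGroup F] [NormedSpace ℂ F]

lemma enorm_fourier_le_lintegral_enorm {f : V → F} (hf : Integrable f) (ξ : V) :
    ‖𝓕 f ξ‖ₑ ≤ ∫⁻ v, ‖f v‖ₑ := by
  rw [← ofReal_norm, ← ofReal_integral_norm_eq_lintegral_enorm hf]
  exact ofReal_le_ofReal
    (VectorFourier.norm_fourierIntegral_le_integral_norm 𝐞 volume (innerₗ V) f ξ)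

lemma continuous_fourier {f : V → F} (hf : Integrable f) : Continuous (𝓕 f) :=
  VectorFourier.fourierIntegral_continuous Real.continuous_fourierChar continuous_inner hf

lemma memLp_top_fourier_and_eLpNorm_le {f : V → F} (hf : Integrable f) :
    MemLp (𝓕 f) ⊤ ∧ eLpNorm (𝓕 f) ⊤ volume ≤ ∫⁻ v, ‖f v‖ₑ := by
  have h : eLpNorm (𝓕 f) ⊤ volume ≤ ∫⁻ v, ‖f v‖ₑ := by
    rw [eLpNorm_exponent_top]
    exact eLpNormEssSup_le_of_ae_enorm_bound (.of_forall (enorm_fourier_le_lintegral_enorm hf))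
  exact ⟨⟨(continuous_fourier hf).aestronglyMeasurable, h.trans_lt hf.2⟩, h⟩

end Fourier

section Euclidean

variable {d : ℕ} {α : ℝ} {f : EuclideanSpace ℝ (Fin d) → ℂ}

lemma He_rpow_two : He d α f ^ (2 : ℝ) = ∫⁻ ξ, ‖ξ‖ₑ ^ (2 * α) * ‖𝓕 f ξ‖ₑ ^ (2 : ℝ) := by
  rw [He, ← rpow_mul]
  norm_num
  rfl

lemma fourier_ae_eq_zero_of_L1e_eq_zero_or_He_eq_zero [NeZero d] (hf : Integrable f)
    (h : L1e d f = 0 ∨ He d α f = 0) : 𝓕 f =ᵐ[volume] 0 := by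
  rcases h with h | h
  · exact .of_forall fun ξ => enorm_eq_zero.1 <| le_zero_iff.1 <|
      (enorm_fourier_le_lintegral_enorm hf ξ).trans_eq h
  · have hJ : ∫⁻ ξ, ‖ξ‖ₑ ^ (2 * α) * ‖𝓕 f ξ‖ₑ ^ (2 : ℝ) = 0 := by
      rw [← He_rpow_two, h, zero_rpow_of_pos two_pos]
    filter_upwards [ae_eq_zero_of_lintegral_enorm_rpow_mul_eq_zero
      (continuous_fourier hf).measurable.enorm hJ] with ξ hξ
    simpa using hξ

end Euclidean

theorem stmt1 (d : ℕ) (hd : 1 ≤ d) (p : ℝ≥0∞) (hp : 1 ≤ p) (α : ℝ)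
    (hα1 : p < 2 → α > (1 / p.toReal - 1 / 2) * d)
    (hα2 : 2 ≤ p → 0 ≤ α) :
    ∃ C : ℝ≥0, 0 < C ∧ ∀ f : EuclideanSpace ℝ (Fin d) → ℂ, Integrable f →
      He d α f ≠ ⊤ →
      MemLp (𝓕 f) p volume ∧
      eLpNorm (𝓕 f) p volume ≤
        C * L1e d f ^ (1 - 2 * (d : ℝ) / (p.toReal * ((d : ℝ) + 2 * α))) *
          He d α f ^ (2 * (d : ℝ) / (p.toReal * ((d : ℝ) + 2 * α))) := by
  have : NeZero d := ⟨by omega⟩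
  rcases eq_or_ne p ⊤ with rfl | hp_top
  · refine ⟨1, one_pos, fun f hf _ => ?_⟩
    simp only [toReal_top, zero_mul, _root_.div_zero, sub_zero, rpow_one, rpow_zero, mul_one,
      coe_one, one_mul]
    exact memLp_top_fourier_and_eLpNorm_le hf
  have hp0 : p ≠ 0 := (zero_lt_one.trans_le hp).ne'
  have hq : 1 ≤ p.toReal := by simpa using toReal_mono hp_top hp
  have hlt : p.toReal < 2 → p < 2 := fun h =>
    (toReal_lt_toReal hp_top ofNat_ne_top).1 (by simpa using h)
  have hge : 2 ≤ p.toReal → 2 ≤ p := fun h =>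
    (toReal_le_toReal ofNat_ne_top hp_top).1 (by simpa using h)
  obtain ⟨C, hC0, hC⟩ := exists_lintegral_rpow_le_mul_rpow
    (volume : Measure (EuclideanSpace ℝ (Fin d))) hq
    (by simpa using fun h => hα1 (hlt h)) fun h => hα2 (hge h)
  refine ⟨C ^ p.toReal⁻¹, NNReal.rpow_pos hC0, fun f hf hB => ?_⟩
  by_cases hdeg : L1e d f = 0 ∨ He d α f = 0
  · have h0 := fourier_ae_eq_zero_of_L1e_eq_zero_or_He_eq_zero hf hdeg
    exact ⟨(memLp_congr_ae h0).2 .zero, by simp [eLpNorm_congr_ae h0]⟩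
  obtain ⟨hA0, hB0⟩ := not_or.1 hdeg
  have hbound := eLpNorm_le_of_lintegral_rpow_le hp0 hp_top <|
    hC _ (continuous_fourier hf).measurable.enorm _ _ (enorm_fourier_le_lintegral_enorm hf)
      He_rpow_two.symm hA0 hf.2.ne hB0 hB
  rw [finrank_euclideanSpace_fin, div_div, mul_comm (_ + _),
    ← coe_rpow_of_nonneg _ (by positivity)] at hbound
  refine ⟨⟨(continuous_fourier hf).aestronglyMeasurable, hbound.trans_lt ?_⟩, hbound⟩
  exact mul_lt_top (mul_lt_top coe_lt_top (rpow_ne_top_of_ne_zero hA0 hf.2.ne).lt_top)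
    (rpow_ne_top_of_ne_zero hB0 hB).lt_top
end

section
/- Let $d\ge 3$ and $a<d-1$. There exists a constant $C=C(a,d)$ such that for all $\xi,\zeta\in\mathbb{R}^d$ (not both zero), $\int_{\mathbb{S}^{d-1}}\bigl|\zeta-|\xi|\sigma\bigr|^{-a}\,d\sigma \le C\,(|\xi|+|\zeta|)^{-a}$, where $d\sigma$ is the surface measure on the unit sphere $\mathbb{S}^{d-1}\subset\mathbb{R}^d$. -/
open MeasureTheory FourierTransform ENNReal
open scoped NNReal

/-!
After rescaling by `|ξ| + |ζ|` we may assume `r + |ζ| = 1` with `r = |ξ|`. For small `r` the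
integrand is bounded. Otherwise `|ζ - rσ| = r |σ - ζ/r|`, and it suffices to bound the Riesz
potential `∫ |σ - p|^{-a} dσ` uniformly in `p`. Splitting into dyadic shells around `p`, this
follows from the upper Ahlfors regularity `σ(B(p, ρ)) ≤ K ρ^{d-1}` of the surface measure, and the
resulting geometric series converges because `a < d - 1`. The regularity itself holds because a
small cap around `q` is the image of a `(d-1)`-ball of the same radius under a `2`-Lipschitz graph
map over the hyperplane `q^⊥`.
-/

open Metric Set Module
open scoped RealInnerProductSpace

theorem ENNReal.rpow_le_rpow_of_nonpos {x y : ℝ≥0∞} {z : ℝ} (hxy : x ≤ y) (hz : z ≤ 0) :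
    y ^ z ≤ x ^ z := by
  rw [← neg_neg z, rpow_neg y, rpow_neg x]
  exact ENNReal.inv_le_inv.2 (rpow_le_rpow hxy (by linarith))

theorem rpow_neg_le_one_add_tsum_indicator {a : ℝ} (ha : 0 < a) (t : ℝ≥0∞) :
    t ^ (-a) ≤
      1 + 2 ^ a * ∑' j : ℕ, (Iic ((2⁻¹ : ℝ≥0∞) ^ j)).indicator (fun _ => (2 ^ a) ^ j) t := by
  have h2a : 1 ≤ (2 : ℝ≥0∞) ^ a := one_le_rpow (by norm_num) ha
  rcases eq_or_ne t 0 with rfl | ht0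
  · have hsum : ∑' j : ℕ, ((2 : ℝ≥0∞) ^ a) ^ j = ⊤ := by
      rw [ENNReal.tsum_geometric, tsub_eq_zero_of_le h2a, ENNReal.inv_zero]
    simp [hsum, ENNReal.mul_top (zero_lt_one.trans_le h2a).ne', ha]
  rcases le_or_gt 1 t with ht1 | ht1
  · exact (rpow_le_one_of_one_le_of_neg ht1 (neg_lt_zero.2 ha)).trans le_self_add
  -- if `2⁻¹ ^ (k + 1) < t ≤ 2⁻¹ ^ k`, the `k`-th term alone dominates `t ^ (-a)`
  lift t to ℝ≥0 using ht1.ne_top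
  obtain ⟨k, hk, hk'⟩ := exists_nat_pow_near_of_lt_one (pos_iff_ne_zero.2 (by exact_mod_cast ht0))
    (by exact_mod_cast ht1.le) (by norm_num : (0 : ℝ≥0) < 2⁻¹) (by norm_num)
  have hcast (j : ℕ) : (((2⁻¹ : ℝ≥0) ^ j : ℝ≥0) : ℝ≥0∞) = 2⁻¹ ^ j := by simp [ENNReal.inv_pow]
  calc (t : ℝ≥0∞) ^ (-a) ≤ ((2⁻¹ : ℝ≥0∞) ^ (k + 1)) ^ (-a) := by
        refine rpow_le_rpow_of_nonpos ?_ (neg_nonpos.2 ha.le)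
        rw [← hcast]
        exact_mod_cast hk.le
    _ = 2 ^ a * (2 ^ a) ^ k := by
        rw [← ENNReal.inv_pow, ENNReal.inv_rpow, rpow_neg, inv_inv, ← rpow_natCast_mul,
          mul_comm, rpow_mul_natCast, pow_succ, mul_comm]
    _ ≤ 2 ^ a * ∑' j : ℕ, (Iic ((2⁻¹ : ℝ≥0∞) ^ j)).indicator (fun _ => (2 ^ a) ^ j) (t : ℝ≥0∞) := by
        gcongr
        refine le_trans (le_of_eq ?_) (ENNReal.le_tsum k)
        rw [indicator_of_mem (by rw [mem_Iic, ← hcast]; exact_mod_cast hk')]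
    _ ≤ _ := le_add_self

theorem lintegral_edist_rpow_neg_le {X : Type*} [PseudoMetricSpace X] [MeasurableSpace X]
    [OpensMeasurableSpace X] (ν : Measure X) (p : X) {n : ℕ} {K : ℝ≥0} {a : ℝ} (ha : 0 < a)
    (hK : ∀ ρ : ℝ≥0, ν (closedBall p ρ) ≤ K * ρ ^ n) :
    ∫⁻ x, edist x p ^ (-a) ∂ν ≤ ν univ + 2 ^ a * K * (1 - 2 ^ a * 2⁻¹ ^ n)⁻¹ := by
  have hball (j : ℕ) : ν (closedEBall p (2⁻¹ ^ j)) ≤ K * (2⁻¹ ^ n) ^ j := by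
    have h := hK ((2⁻¹ : ℝ≥0) ^ j)
    rw [← closedEBall_coe] at h
    simpa [ENNReal.inv_pow, ← pow_mul, mul_comm n j] using h
  calc ∫⁻ x, edist x p ^ (-a) ∂ν
      ≤ ∫⁻ x, 1 + 2 ^ a * ∑' j : ℕ,
          (closedEBall p (2⁻¹ ^ j)).indicator (fun _ => (2 ^ a) ^ j) x ∂ν :=
        lintegral_mono fun x => rpow_neg_le_one_add_tsum_indicator ha (edist x p)
    _ = ν univ + 2 ^ a * ∑' j : ℕ, (2 ^ a) ^ j * ν (closedEBall p (2⁻¹ ^ j)) := by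
        have hmeas (j : ℕ) : MeasurableSet (closedEBall p (2⁻¹ ^ j)) :=
          Metric.isClosed_closedEBall.measurableSet
        rw [lintegral_add_left measurable_const, lintegral_const, one_mul,
          lintegral_const_mul' _ _ (rpow_ne_top_of_nonneg ha.le ofNat_ne_top),
          lintegral_tsum fun j => (measurable_const.indicator (hmeas j)).aemeasurable]
        simp_rw [lintegral_indicator_const (hmeas _)]
    _ ≤ ν univ + 2 ^ a * ∑' j : ℕ, (2 ^ a) ^ j * ((K : ℝ≥0∞) * (2⁻¹ ^ n) ^ j) := by
        gcongr with j
        exact hball j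
    _ = ν univ + 2 ^ a * ((K : ℝ≥0∞) * ∑' j : ℕ, (2 ^ a * 2⁻¹ ^ n) ^ j) := by
        rw [← ENNReal.tsum_mul_left (a := (K : ℝ≥0∞))]
        exact congrArg _ (congrArg _ (tsum_congr fun j => by ring))
    _ = ν univ + 2 ^ a * K * (1 - 2 ^ a * 2⁻¹ ^ n)⁻¹ := by
        rw [ENNReal.tsum_geometric, mul_assoc]

theorem exists_lintegral_edist_rpow_neg_le {X : Type*} [PseudoMetricSpace X] [MeasurableSpace X]
    [OpensMeasurableSpace X] (ν : Measure X) [IsFiniteMeasure ν] {n : ℕ} {K : ℝ≥0} {a : ℝ}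
    (ha0 : 0 < a) (ha : a < n) (hK : ∀ p (ρ : ℝ≥0), ν (closedBall p ρ) ≤ K * ρ ^ n) :
    ∃ C : ℝ≥0, ∀ p, ∫⁻ x, edist x p ^ (-a) ∂ν ≤ C := by
  have hratio : 2 ^ a * 2⁻¹ ^ n < (1 : ℝ≥0∞) := by
    rw [← ENNReal.inv_pow, ← div_eq_mul_inv, ENNReal.div_lt_iff (Or.inl (pow_ne_zero _ two_ne_zero))
      (Or.inl (pow_ne_top ofNat_ne_top)), one_mul, ← rpow_natCast]
    exact rpow_lt_rpow_of_exponent_lt one_lt_two ofNat_ne_top ha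
  have hfin : ν univ + 2 ^ a * K * (1 - 2 ^ a * 2⁻¹ ^ n)⁻¹ ≠ ∞ :=
    add_ne_top.2 ⟨measure_ne_top ν univ,
      mul_ne_top (mul_ne_top (rpow_ne_top_of_nonneg ha0.le ofNat_ne_top) coe_ne_top)
        (inv_ne_top.2 (tsub_pos_of_lt hratio).ne')⟩
  exact ⟨_, fun p => (lintegral_edist_rpow_neg_le ν p ha0 (hK p)).trans_eq (coe_toNNReal hfin).symm⟩

theorem exists_measure_closedBall_le_of_forall_mem {X : Type*} [PseudoMetricSpace X]
    [MeasurableSpace X] (ν : Measure X) [IsFiniteMeasure ν] {S : Set X} (hS : ν Sᶜ = 0)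
    {r₀ K : ℝ≥0} (hr₀ : 0 < r₀) {n : ℕ}
    (hK : ∀ q ∈ S, ∀ ρ : ℝ≥0, ρ ≤ r₀ → ν (closedBall q ρ) ≤ K * ρ ^ n) :
    ∃ K' : ℝ≥0, ∀ p (ρ : ℝ≥0), ν (closedBall p ρ) ≤ K' * ρ ^ n := by
  refine ⟨K * 2 ^ n + (ν univ).toNNReal * (2 / r₀) ^ n, fun p ρ => ?_⟩
  push_cast [add_mul]
  rcases le_or_gt (2 * ρ) r₀ with hρ | hρ
  · refine le_add_right ?_
    rcases (closedBall p ρ ∩ S).eq_empty_or_nonempty with hempty | ⟨σ, hσp, hσS⟩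
    · refine (measure_mono_null (fun x hx hxS => ?_) hS).trans_le zero_le
      exact hempty.subset ⟨hx, hxS⟩
    calc ν (closedBall p ρ) ≤ ν (closedBall σ (2 * ρ : ℝ≥0)) := by
          refine measure_mono (closedBall_subset_closedBall' ?_)
          rw [mem_closedBall] at hσp
          push_cast
          linarith [dist_comm σ p]
      _ ≤ K * (2 * ρ : ℝ≥0) ^ n := hK σ hσS _ hρ
      _ = K * 2 ^ n * ρ ^ n := by push_cast; ring
  · refine le_add_left ?_
    calc ν (closedBall p ρ) ≤ (ν univ).toNNReal := by
          rw [coe_toNNReal (measure_ne_top ν univ)]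
          exact measure_mono (subset_univ _)
      _ ≤ (ν univ).toNNReal * ((2 / r₀) * ρ : ℝ≥0) ^ n := by
          refine le_mul_of_one_le_right' (one_le_pow₀ ?_)
          have : (1 : ℝ≥0) ≤ 2 / r₀ * ρ := by
            rw [div_mul_eq_mul_div, one_le_div hr₀]
            exact hρ.le
          exact_mod_cast this
      _ = _ := by push_cast; ring

theorem abs_sqrt_one_sub_sq_sub_sqrt_le {s t : ℝ} (hs0 : 0 ≤ s) (hs : s ≤ 1 / 2) (ht0 : 0 ≤ t)
    (ht : t ≤ 1 / 2) : |√(1 - s ^ 2) - √(1 - t ^ 2)| ≤ |s - t| := by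
  set u := √(1 - s ^ 2)
  set v := √(1 - t ^ 2)
  have hu : u ^ 2 = 1 - s ^ 2 := Real.sq_sqrt (by nlinarith)
  have hv : v ^ 2 = 1 - t ^ 2 := Real.sq_sqrt (by nlinarith)
  have hu' : 1 / 2 ≤ u := by nlinarith [Real.sqrt_nonneg (1 - s ^ 2)]
  have hv' : 1 / 2 ≤ v := by nlinarith [Real.sqrt_nonneg (1 - t ^ 2)]
  -- `(u - v)(u + v) = t² - s²`, where `u + v ≥ 1 ≥ s + t`
  have key : |u - v| * (u + v) = |s - t| * (s + t) := by
    rw [← abs_of_nonneg (by linarith : 0 ≤ u + v), ← abs_of_nonneg (by linarith : 0 ≤ s + t),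
      ← abs_mul, ← abs_mul, ← abs_neg ((s - t) * (s + t))]
    congr 1
    nlinarith
  nlinarith [abs_nonneg (u - v), abs_nonneg (s - t)]

section Hemisphere

variable {E F : Type*} [NormedAddCommGroup E] [InnerProductSpace ℝ E] [NormedAddCommGroup F]
  [NormedSpace ℝ F]

noncomputable def hemisphereGraph (q : E) (ι : F →ₗᵢ[ℝ] E) (w : F) : E := √(1 - ‖w‖ ^ 2) • q + ι w

theorem lipschitzOnWith_hemisphereGraph {q : E} (hq : ‖q‖ = 1) (ι : F →ₗᵢ[ℝ] E) :
    LipschitzOnWith 2 (hemisphereGraph q ι) (closedBall 0 (1 / 2)) := by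
  refine LipschitzOnWith.of_dist_le_mul fun w hw w' hw' => ?_
  rw [mem_closedBall_zero_iff] at hw hw'
  have hsqrt := abs_sqrt_one_sub_sq_sub_sqrt_le (norm_nonneg w) hw (norm_nonneg w') hw'
  calc dist (hemisphereGraph q ι w) (hemisphereGraph q ι w')
      = ‖(√(1 - ‖w‖ ^ 2) - √(1 - ‖w'‖ ^ 2)) • q + ι (w - w')‖ := by
        rw [dist_eq_norm, hemisphereGraph, hemisphereGraph, map_sub, sub_smul]
        congr 1
        abel
    _ ≤ |‖w‖ - ‖w'‖| + ‖w - w'‖ := by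
        refine (norm_add_le _ _).trans ?_
        rw [norm_smul, hq, mul_one, Real.norm_eq_abs, ι.norm_map]
        gcongr
    _ ≤ (2 : ℝ≥0) * dist w w' := by
        rw [dist_eq_norm]
        push_cast
        linarith [abs_norm_sub_norm_le w w']

theorem sphere_inter_closedBall_subset_image_hemisphereGraph {q : E} (hq : ‖q‖ = 1)
    {ι : F →ₗᵢ[ℝ] E} (hι : ∀ u ∈ (ℝ ∙ q)ᗮ, u ∈ range ι) {ρ : ℝ} (hρ : ρ ≤ 1) :
    sphere 0 1 ∩ closedBall q ρ ⊆ hemisphereGraph q ι '' closedBall 0 ρ := by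
  rintro σ ⟨hσ, hσq⟩
  rw [mem_sphere_zero_iff_norm] at hσ
  rw [mem_closedBall_iff_norm] at hσq
  set c := ⟪q, σ⟫
  have hdist : ‖σ - q‖ ^ 2 = 2 - 2 * c := by
    rw [norm_sub_sq_real, hσ, hq, real_inner_comm]
    ring
  have hc0 : 0 ≤ c := by nlinarith [norm_nonneg (σ - q)]
  obtain ⟨w, hw⟩ := hι (σ - c • q) (by
    rw [Submodule.mem_orthogonal_singleton_iff_inner_right, inner_sub_right,
      real_inner_smul_right, real_inner_self_eq_norm_sq, hq]
    ring)
  have hw2 : ‖w‖ ^ 2 = 1 - c ^ 2 := by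
    rw [← ι.norm_map, hw, norm_sub_sq_real, real_inner_smul_right, norm_smul, hσ, hq,
      real_inner_comm, Real.norm_eq_abs, mul_one, sq_abs]
    ring
  refine ⟨w, ?_, ?_⟩
  · rw [mem_closedBall_zero_iff]
    refine le_trans ((pow_le_pow_iff_left₀ (norm_nonneg _) (norm_nonneg _) two_ne_zero).1 ?_) hσq
    rw [hw2, hdist]
    nlinarith
  · rw [hemisphereGraph, hw, hw2, show 1 - (1 - c ^ 2) = c ^ 2 by ring, Real.sqrt_sq hc0]
    abel

end Hemisphere

section Rescaling

variable {V : Type*} [NormedAddCommGroup V] [NormedSpace ℝ V]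

theorem lintegral_enorm_sub_smul_rpow_neg_eq [MeasurableSpace V] (ν : Measure V) {N : ℝ}
    (hN : 0 < N) (ζ : V) (t a : ℝ) :
    ∫⁻ σ, ‖ζ - t • σ‖ₑ ^ (-a) ∂ν =
      ENNReal.ofReal N ^ (-a) * ∫⁻ σ, ‖N⁻¹ • ζ - (t / N) • σ‖ₑ ^ (-a) ∂ν := by
  rw [← lintegral_const_mul' _ _ (rpow_ne_top_of_ne_zero (by simpa using hN) ofReal_ne_top)]
  refine lintegral_congr fun σ => ?_
  have h : ζ - t • σ = N • (N⁻¹ • ζ - (t / N) • σ) := by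
    rw [smul_sub, smul_inv_smul₀ hN.ne', smul_smul, mul_div_cancel₀ _ hN.ne']
  rw [h, enorm_smul, Real.enorm_of_nonneg hN.le, mul_rpow_of_ne_top ofReal_ne_top enorm_ne_top]

theorem enorm_sub_smul_rpow_neg_le {a r : ℝ} (ha : 0 ≤ a) (hr : 4⁻¹ ≤ r) (ζ σ : V) :
    ‖ζ - r • σ‖ₑ ^ (-a) ≤ 4 ^ a * edist σ (r⁻¹ • ζ) ^ (-a) := by
  have h : ‖ζ - r • σ‖ₑ = ENNReal.ofReal r * edist σ (r⁻¹ • ζ) := by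
    rw [← enorm_neg, neg_sub, edist_eq_enorm_sub, ← Real.enorm_of_nonneg (by linarith),
      ← enorm_smul, smul_sub, smul_inv_smul₀ (by linarith)]
  calc ‖ζ - r • σ‖ₑ ^ (-a) ≤ (4⁻¹ * edist σ (r⁻¹ • ζ)) ^ (-a) := by
        refine rpow_le_rpow_of_nonpos ?_ (neg_nonpos.2 ha)
        rw [h, ← ofReal_ofNat 4, ← ofReal_inv_of_pos four_pos]
        gcongr
    _ = 4 ^ a * edist σ (r⁻¹ • ζ) ^ (-a) := by
        rw [mul_rpow_of_ne_top (by simp) (edist_ne_top _ _), ENNReal.inv_rpow, rpow_neg, inv_inv]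

end Rescaling

section Sphere

variable {E : Type*} [NormedAddCommGroup E] [InnerProductSpace ℝ E] [MeasurableSpace E]
  [BorelSpace E] {m : ℕ} [Fact (finrank ℝ E = m + 1)]

theorem exists_hausdorffMeasure_sphere_inter_closedBall_le :
    ∃ K : ℝ≥0, ∀ q ∈ sphere (0 : E) 1, ∀ ρ : ℝ≥0, ρ ≤ 1 / 2 →
      μH[m] (sphere (0 : E) 1 ∩ closedBall q ρ) ≤ K * ρ ^ m := by
  refine ⟨2 ^ m * (μH[m] (ball (0 : EuclideanSpace ℝ (Fin m)) 1)).toNNReal, fun q hq ρ hρ => ?_⟩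
  rw [mem_sphere_zero_iff_norm] at hq
  let b := OrthonormalBasis.fromOrthogonalSpanSingleton (𝕜 := ℝ) m
    (norm_ne_zero_iff.1 (by rw [hq]; exact one_ne_zero))
  let ι : EuclideanSpace ℝ (Fin m) →ₗᵢ[ℝ] E := (ℝ ∙ q)ᗮ.subtypeₗᵢ.comp b.repr.symm.toLinearIsometry
  have hι : ∀ u ∈ (ℝ ∙ q)ᗮ, u ∈ range ι := fun u hu => ⟨b.repr ⟨u, hu⟩, by simp [ι]⟩
  have hρ' : (ρ : ℝ) ≤ 1 / 2 := by exact_mod_cast hρ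
  calc μH[m] (sphere (0 : E) 1 ∩ closedBall q ρ)
      ≤ μH[m] (hemisphereGraph q ι '' closedBall 0 ρ) :=
        measure_mono (sphere_inter_closedBall_subset_image_hemisphereGraph hq hι (by linarith))
    _ ≤ (2 : ℝ≥0) ^ (m : ℝ) * μH[m] (closedBall (0 : EuclideanSpace ℝ (Fin m)) ρ) :=
        ((lipschitzOnWith_hemisphereGraph hq ι).mono
          (closedBall_subset_closedBall hρ')).hausdorffMeasure_image_le (Nat.cast_nonneg m)
    _ = _ := by
        rw [Measure.addHaar_closedBall _ _ ρ.coe_nonneg, finrank_euclideanSpace_fin,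
          ENNReal.ofReal_pow ρ.coe_nonneg, ofReal_coe_nnreal, ENNReal.rpow_natCast]
        push_cast [coe_toNNReal measure_ball_lt_top.ne]
        ring

theorem hausdorffMeasure_sphere_lt_top : μH[m] (sphere (0 : E) 1) < ∞ := by
  have : FiniteDimensional ℝ E := .of_fact_finrank_eq_succ m
  obtain ⟨K, hK⟩ := exists_hausdorffMeasure_sphere_inter_closedBall_le (E := E) (m := m)
  refine (isCompact_sphere 0 1).measure_lt_top_of_nhdsWithin fun q hq => ?_
  have hhalf : (0 : ℝ) < (1 / 2 : ℝ≥0) := by norm_num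
  refine ⟨_, inter_mem_nhdsWithin _ (closedBall_mem_nhds q hhalf), ?_⟩
  exact (hK q hq _ le_rfl).trans_lt (mul_lt_top coe_lt_top (pow_lt_top coe_lt_top))

theorem exists_hausdorffMeasure_restrict_sphere_closedBall_le :
    ∃ K : ℝ≥0, ∀ p (ρ : ℝ≥0), μH[m].restrict (sphere (0 : E) 1) (closedBall p ρ) ≤ K * ρ ^ m := by
  have : IsFiniteMeasure (μH[m].restrict (sphere (0 : E) 1)) :=
    isFiniteMeasure_restrict.2 hausdorffMeasure_sphere_lt_top.ne
  obtain ⟨K, hK⟩ := exists_hausdorffMeasure_sphere_inter_closedBall_le (E := E) (m := m)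
  refine exists_measure_closedBall_le_of_forall_mem _ (S := sphere 0 1) (K := K) ?_
    (by norm_num : (0 : ℝ≥0) < 1 / 2) fun q hq ρ hρ => ?_
  · rw [Measure.restrict_apply' isClosed_sphere.measurableSet, compl_inter_self, measure_empty]
  · rw [Measure.restrict_apply measurableSet_closedBall, inter_comm]
    exact hK q hq ρ hρ

theorem exists_lintegral_sphere_enorm_sub_smul_rpow_neg_le {a : ℝ} (ha : a < m) :
    ∃ C : ℝ≥0, ∀ (r : ℝ) (ζ : E), 0 ≤ r → r + ‖ζ‖ = 1 →
      ∫⁻ σ in sphere (0 : E) 1, ‖ζ - r • σ‖ₑ ^ (-a) ∂μH[m] ≤ C := by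
  have hS := hausdorffMeasure_sphere_lt_top (E := E) (m := m)
  have hconst (f : E → ℝ≥0∞) (c : ℝ≥0∞) (hf : ∀ σ ∈ sphere (0 : E) 1, f σ ≤ c) :
      ∫⁻ σ in sphere (0 : E) 1, f σ ∂μH[m] ≤ c * μH[m] (sphere (0 : E) 1) :=
    (setLIntegral_mono' isClosed_sphere.measurableSet hf).trans (setLIntegral_const _ _).le
  rcases le_or_gt a 0 with ha0 | ha0
  · refine ⟨(μH[m] (sphere (0 : E) 1)).toNNReal, fun r ζ hr hsum => ?_⟩
    rw [coe_toNNReal hS.ne]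
    refine (hconst _ 1 fun σ hσ => rpow_le_one ?_ (neg_nonneg.2 ha0)).trans_eq (one_mul _)
    rw [mem_sphere_zero_iff_norm] at hσ
    rw [← ofReal_norm, ← ofReal_one]
    refine ofReal_le_ofReal ((norm_sub_le _ _).trans ?_)
    rw [norm_smul, hσ, Real.norm_of_nonneg hr]
    linarith
  obtain ⟨K, hK⟩ := exists_hausdorffMeasure_restrict_sphere_closedBall_le (E := E) (m := m)
  have : IsFiniteMeasure (μH[m].restrict (sphere (0 : E) 1)) := isFiniteMeasure_restrict.2 hS.ne
  obtain ⟨C₀, hC₀⟩ := exists_lintegral_edist_rpow_neg_le _ ha0 ha hK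
  refine ⟨2 ^ a * (μH[m] (sphere (0 : E) 1)).toNNReal + 4 ^ a * C₀, fun r ζ hr hsum => ?_⟩
  push_cast [coe_toNNReal hS.ne, coe_rpow_of_nonneg _ ha0.le]
  rcases lt_or_ge r 4⁻¹ with hr4 | hr4
  · refine le_add_right (hconst _ (2 ^ a) fun σ hσ => ?_)
    rw [mem_sphere_zero_iff_norm] at hσ
    have hlow : 2⁻¹ ≤ ‖ζ - r • σ‖ := by
      have := norm_sub_norm_le ζ (r • σ)
      rw [norm_smul, hσ, Real.norm_of_nonneg hr] at this
      linarith
    calc ‖ζ - r • σ‖ₑ ^ (-a) ≤ (2⁻¹ : ℝ≥0∞) ^ (-a) := by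
          refine rpow_le_rpow_of_nonpos ?_ (neg_nonpos.2 ha0.le)
          rw [← ofReal_norm, ← ofReal_ofNat 2, ← ofReal_inv_of_pos two_pos]
          exact ofReal_le_ofReal hlow
      _ = 2 ^ a := by rw [ENNReal.inv_rpow, rpow_neg, inv_inv]
  · refine le_add_left ?_
    calc ∫⁻ σ in sphere (0 : E) 1, ‖ζ - r • σ‖ₑ ^ (-a) ∂μH[m]
        ≤ ∫⁻ σ in sphere (0 : E) 1, 4 ^ a * edist σ (r⁻¹ • ζ) ^ (-a) ∂μH[m] :=
          lintegral_mono fun σ => enorm_sub_smul_rpow_neg_le ha0.le hr4 ζ σ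
      _ = 4 ^ a * ∫⁻ σ in sphere (0 : E) 1, edist σ (r⁻¹ • ζ) ^ (-a) ∂μH[m] :=
          lintegral_const_mul' _ _ (rpow_ne_top_of_nonneg ha0.le ofNat_ne_top)
      _ ≤ 4 ^ a * C₀ := by
          gcongr
          exact hC₀ _

end Sphere

theorem stmt7 (d : ℕ) (hd : 3 ≤ d) (a : ℝ) (ha : a < (d : ℝ) - 1) :
    ∃ C : ℝ≥0, 0 < C ∧ ∀ ξ ζ : EuclideanSpace ℝ (Fin d), ¬(ξ = 0 ∧ ζ = 0) →
      (∫⁻ σ in Metric.sphere (0 : EuclideanSpace ℝ (Fin d)) 1,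
          (‖ζ - ‖ξ‖ • σ‖₊ : ℝ≥0∞) ^ (-a) ∂μH[(d : ℝ) - 1]) ≤
        C * ((‖ξ‖₊ : ℝ≥0∞) + (‖ζ‖₊ : ℝ≥0∞)) ^ (-a) := by
  obtain ⟨m, rfl⟩ : ∃ m, d = m + 1 := ⟨d - 1, by omega⟩
  have : Fact (finrank ℝ (EuclideanSpace ℝ (Fin (m + 1))) = m + 1) := ⟨finrank_euclideanSpace_fin⟩
  have hdim : ((m + 1 : ℕ) : ℝ) - 1 = m := by push_cast; ring
  rw [hdim] at ha ⊢
  obtain ⟨C, hC⟩ := exists_lintegral_sphere_enorm_sub_smul_rpow_neg_le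
    (E := EuclideanSpace ℝ (Fin (m + 1))) ha
  refine ⟨C + 1, by positivity, fun ξ ζ hξζ => ?_⟩
  set N := ‖ξ‖ + ‖ζ‖
  have hN : 0 < N := by
    by_contra! h
    exact hξζ ⟨norm_eq_zero.1 (by linarith [norm_nonneg ξ, norm_nonneg ζ]),
      norm_eq_zero.1 (by linarith [norm_nonneg ξ, norm_nonneg ζ])⟩
  have hnormalized : ‖ξ‖ / N + ‖N⁻¹ • ζ‖ = 1 := by
    rw [norm_smul, norm_inv, Real.norm_of_nonneg hN.le, inv_mul_eq_div, ← add_div, div_self hN.ne']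
  have hsum : (‖ξ‖₊ : ℝ≥0∞) + ‖ζ‖₊ = ENNReal.ofReal N := by
    rw [ENNReal.ofReal_add (norm_nonneg _) (norm_nonneg _), ofReal_norm, ofReal_norm]
    rfl
  rw [hsum, mul_comm]
  calc ∫⁻ σ in sphere 0 1, ‖ζ - ‖ξ‖ • σ‖ₑ ^ (-a) ∂μH[m]
      = ENNReal.ofReal N ^ (-a) * ∫⁻ σ in sphere 0 1, ‖N⁻¹ • ζ - (‖ξ‖ / N) • σ‖ₑ ^ (-a) ∂μH[m] :=
        lintegral_enorm_sub_smul_rpow_neg_eq _ hN ζ ‖ξ‖ a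
    _ ≤ ENNReal.ofReal N ^ (-a) * (C + 1 : ℝ≥0) := by
        gcongr
        exact (hC _ _ (by positivity) hnormalized).trans (by simp)
end
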